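/- arXiv:1709.04357 — 5 statements merged into one kernel-verified Lean document; each statement's English description precedes it below -/
import Mathlib

section
/- Let 0<q<1, let k≥1 be an integer and let a>0 be real. For integers n≥0 set u_n := (k + a k^{−1})^n / n! · q^{−n(2k−n−1)/2}. Then u_j < u_{2k−1−j} for every integer j with 0 ≤ j ≤ k−1. -/
/-!
The `q`-exponent `n (2k - n - 1)` is invariant under `n ↦ 2k - 1 - n`, so the claim reduces to
`c ^ j / j! < c ^ m / m!` for `m = 2k - 1 - j` and `c = k + a / k > k`. The quotient `m! / j!` is a
product of `m - j` consecutive integers centred at `k`; pairing `k - t` with `k + t` bounds it by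
`k ^ (m - j) < c ^ (m - j)`.
-/

open Nat

theorem factorial_add_two_mul_add_one_le (n d : ℕ) :
    (n + (2 * d + 1))! ≤ n ! * (n + d + 1) ^ (2 * d + 1) := by
  induction d generalizing n with
  | zero => simp [Nat.factorial_succ, Nat.mul_comm]
  | succ d ih =>
    have hpair : (n + 2 * d + 3) * (n + 1) ≤ (n + d + 2) ^ 2 := by nlinarith
    calc (n + (2 * (d + 1) + 1))! = (n + 2 * d + 3) * (n + 1 + (2 * d + 1))! := by
          rw [show n + (2 * (d + 1) + 1) = n + 1 + (2 * d + 1) + 1 by ring, Nat.factorial_succ]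
          ring_nf
      _ ≤ (n + 2 * d + 3) * ((n + 1)! * (n + d + 2) ^ (2 * d + 1)) := by
          gcongr
          simpa only [Nat.add_right_comm n 1 d] using ih (n + 1)
      _ = (n + 2 * d + 3) * (n + 1) * (n ! * (n + d + 2) ^ (2 * d + 1)) := by
          rw [Nat.factorial_succ]; ring
      _ ≤ (n + d + 2) ^ 2 * (n ! * (n + d + 2) ^ (2 * d + 1)) := by gcongr
      _ = n ! * (n + (d + 1) + 1) ^ (2 * (d + 1) + 1) := by ring

theorem pow_div_factorial_lt_of_factorial_le {b c : ℝ} {j d : ℕ} (hb : 0 ≤ b) (hbc : b < c)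
    (hd : d ≠ 0) (hfac : ((j + d)! : ℝ) ≤ j ! * b ^ d) :
    c ^ j / j ! < c ^ (j + d) / (j + d)! := by
  have hc : 0 < c := hb.trans_lt hbc
  rw [div_lt_div_iff₀ (by positivity) (by positivity)]
  calc c ^ j * (j + d)! ≤ c ^ j * (j ! * b ^ d) := by gcongr
    _ < c ^ j * (j ! * c ^ d) := by gcongr
    _ = c ^ (j + d) * j ! := by ring

theorem stmt5_general (q : ℝ) (hq0 : 0 < q) (k : ℕ) (hk : 1 ≤ k)
    (a : ℝ) (ha : 0 < a) (u : ℕ → ℝ)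
    (hu : ∀ n : ℕ,
      u n = ((k : ℝ) + a / (k : ℝ)) ^ n / (n.factorial : ℝ) *
        (q ^ (n * (2 * k - n - 1) / 2))⁻¹) :
    ∀ j : ℕ, j ≤ k - 1 → u j < u (2 * k - 1 - j) := by
  intro j hj
  obtain ⟨d, rfl⟩ : ∃ d, k = j + d + 1 := ⟨k - 1 - j, by omega⟩
  have hm : 2 * (j + d + 1) - 1 - j = j + (2 * d + 1) := by omega
  have hexp : (j + (2 * d + 1)) * (2 * (j + d + 1) - (j + (2 * d + 1)) - 1) =
      j * (2 * (j + d + 1) - j - 1) := by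
    rw [show 2 * (j + d + 1) - (j + (2 * d + 1)) - 1 = j by omega,
      show 2 * (j + d + 1) - j - 1 = j + (2 * d + 1) by omega, Nat.mul_comm]
  rw [hm, hu, hu, hexp]
  refine mul_lt_mul_of_pos_right ?_ (by positivity)
  exact pow_div_factorial_lt_of_factorial_le (by positivity)
    (lt_add_of_pos_right _ (by positivity)) (by omega)
    (by exact_mod_cast factorial_add_two_mul_add_one_le j d)

theorem stmt5 (q : ℝ) (hq0 : 0 < q) (hq1 : q < 1) (k : ℕ) (hk : 1 ≤ k)
    (a : ℝ) (ha : 0 < a) (u : ℕ → ℝ)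
    (hu : ∀ n : ℕ,
      u n = ((k : ℝ) + a / (k : ℝ)) ^ n / (n.factorial : ℝ) *
        (q ^ (n * (2 * k - n - 1) / 2))⁻¹) :
    ∀ j : ℕ, j ≤ k - 1 → u j < u (2 * k - 1 - j) :=
  stmt5_general q hq0 k hk a ha u hu
end

section
/- Let 0<q<1, let a_0>0 and C≥0 be real, and let a:ℕ→ℝ satisfy a(k)>0 and |a(k) − a_0| ≤ C/k for all integers k≥1. For integers k≥1 and n≥0 set u_n^{(k)} := (k + a(k) k^{−1})^n / n! · q^{−n(2k−n−1)/2}, and for 0 ≤ j ≤ k−1 set v_j^{(k)} := u_{2k−j−1}^{(k)} − u_j^{(k)}. Then there exists a positive integer N_0 (depending on q, a_0, C) such that for all integers N ≥ N_0 and all integers k ≥ q^{−3N}, one has v_j^{(k)} < v_{j+1}^{(k)} for all integers j with 0 ≤ j ≤ k−N. -/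
/-!
Write `A = k + a(k)/k`, `k = j + c + 2`, `x = A^(k+c)/(k+c)!` and `y = A^(k-c-1)/(k-c-1)!`.
The exponent `n(2k-n-1)/2` is invariant under `n ↦ 2k-1-n` and grows by `c + 1` from `j` to
`j + 1`, so after dividing by `q^(-j(2k-j-1)/2)` the claim reads `x α - y β < Q (x - y)` with
`Q = q^(-(c+1))`, `α = A/(k+c+1) ≤ 2` and `β = (k-c-1)/A`. Pairing the factors `k - t` and `k + t`
of `(k+c)!/(k-c-1)!` gives `x ≥ (1 + c²/k²) y`, while `α - β ≤ (A² - k² + (c+1)²)/k²` and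
`A² - k²` stays bounded. As `c ≥ N - 2`, the factor `Q` wins once `N` is large, and `k ≥ q^(-3N)`
makes `k` large compared with `N` and the constants.
-/

open Finset Filter Nat

lemma sq_mul_prod_Ico_le {k c : ℕ} (hck : c ≤ k) :
    (k : ℝ) ^ 2 * ∏ i ∈ Ico (k - c) (k + c + 1), (i : ℝ) ≤
      (k : ℝ) ^ (2 * c + 1) * ((k : ℝ) ^ 2 - (c : ℝ) ^ 2) := by
  induction c with
  | zero =>
    rw [Nat.sub_zero, Ico_succ_singleton, prod_singleton]
    push_cast
    exact le_of_eq (by ring)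
  | succ c ih =>
    have hck' : (c : ℝ) + 1 ≤ k := by exact_mod_cast hck
    have hsplit : ∏ i ∈ Ico (k - (c + 1)) (k + (c + 1) + 1), (i : ℝ) =
        ((k : ℝ) ^ 2 - ((c : ℝ) + 1) ^ 2) * ∏ i ∈ Ico (k - c) (k + c + 1), (i : ℝ) := by
      rw [show k + (c + 1) + 1 = k + c + 1 + 1 by ring, prod_Ico_succ_top (by omega),
        prod_eq_prod_Ico_succ_bot (by omega), show k - (c + 1) + 1 = k - c by omega,
        Nat.cast_sub hck]
      push_cast
      ring
    rw [hsplit]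
    set P := ∏ i ∈ Ico (k - c) (k + c + 1), (i : ℝ)
    calc (k : ℝ) ^ 2 * (((k : ℝ) ^ 2 - ((c : ℝ) + 1) ^ 2) * P)
        = ((k : ℝ) ^ 2 - ((c : ℝ) + 1) ^ 2) * ((k : ℝ) ^ 2 * P) := by ring
      _ ≤ ((k : ℝ) ^ 2 - ((c : ℝ) + 1) ^ 2) * ((k : ℝ) ^ (2 * c + 1) * (k : ℝ) ^ 2) := by
          refine mul_le_mul_of_nonneg_left ((ih (by omega)).trans ?_) (by nlinarith)
          gcongr
          nlinarith
      _ = (k : ℝ) ^ (2 * (c + 1) + 1) * ((k : ℝ) ^ 2 - ((c + 1 : ℕ) : ℝ) ^ 2) := by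
          push_cast; ring

lemma factorial_mul_prod_Ico {m n : ℕ} (h : m ≤ n) :
    m ! * ∏ i ∈ Ico (m + 1) (n + 1), i = n ! := by
  rw [← prod_Ico_id_eq_factorial, ← prod_Ico_id_eq_factorial n,
    prod_Ico_consecutive _ (by omega) (by omega)]

lemma one_add_sq_div_sq_mul_pow_div_factorial_le {A : ℝ} {k c : ℕ} (hck : c < k)
    (hA : (k : ℝ) ≤ A) :
    (1 + (c : ℝ) ^ 2 / (k : ℝ) ^ 2) * (A ^ (k - c - 1) / (k - c - 1)!) ≤
      A ^ (k + c) / (k + c)! := by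
  set m := k - c - 1
  set P := ∏ i ∈ Ico (k - c) (k + c + 1), (i : ℝ)
  have hk : (0 : ℝ) < k := by exact_mod_cast (show 0 < k by omega)
  have hP : 0 < P := prod_pos fun i hi => by
    have := (mem_Ico.1 hi).1
    exact_mod_cast (show 0 < i by omega)
  have hfact : (m ! : ℝ) * P = (k + c)! := by
    have h := factorial_mul_prod_Ico (show m ≤ k + c by omega)
    rw [show m + 1 = k - c by omega] at h
    simpa [P] using congrArg (Nat.cast : ℕ → ℝ) h
  have hPk : (1 + (c : ℝ) ^ 2 / (k : ℝ) ^ 2) * P ≤ (k : ℝ) ^ (2 * c + 1) := by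
    have hsq := sq_mul_prod_Ico_le hck.le
    rw [← mul_le_mul_iff_of_pos_left (pow_pos hk 2)]
    calc (k : ℝ) ^ 2 * ((1 + (c : ℝ) ^ 2 / (k : ℝ) ^ 2) * P)
        = (1 + (c : ℝ) ^ 2 / (k : ℝ) ^ 2) * ((k : ℝ) ^ 2 * P) := by ring
      _ ≤ (1 + (c : ℝ) ^ 2 / (k : ℝ) ^ 2) *
            ((k : ℝ) ^ (2 * c + 1) * ((k : ℝ) ^ 2 - (c : ℝ) ^ 2)) := by gcongr
      _ = (k : ℝ) ^ 2 * (k : ℝ) ^ (2 * c + 1) -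
            (k : ℝ) ^ (2 * c + 1) * (c : ℝ) ^ 4 / (k : ℝ) ^ 2 := by field_simp; ring
      _ ≤ (k : ℝ) ^ 2 * (k : ℝ) ^ (2 * c + 1) := sub_le_self _ (by positivity)
  have hpow : A ^ (k + c) = A ^ m * A ^ (2 * c + 1) := by
    rw [← pow_add]; congr 1; omega
  rw [← hfact, hpow, mul_div_mul_comm, mul_comm]
  gcongr
  · exact div_nonneg (pow_nonneg (hk.le.trans hA) _) (by positivity)
  · rw [le_div_iff₀ hP]
    exact hPk.trans (pow_le_pow_left₀ hk.le hA _)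

lemma pow_div_factorial_sub_lt {A Q : ℝ} {j c k : ℕ} (hk : k = j + c + 2) (hc : 1 ≤ c)
    (hkA : (k : ℝ) ≤ A) (hA : A ≤ 2 * k) (hQ : A ^ 2 - (k : ℝ) ^ 2 + 7 ≤ Q) :
    A ^ (j + 2 * c + 3) / (j + 2 * c + 3)! - A ^ j / j ! <
      Q * (A ^ (j + 2 * c + 2) / (j + 2 * c + 2)! - A ^ (j + 1) / (j + 1)!) := by
  have hkR : (k : ℝ) = j + c + 2 := by rw [hk]; push_cast; ring
  have hk0 : (0 : ℝ) < k := by rw [hkR]; positivity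
  have hA0 : 0 < A := hk0.trans_le hkA
  have hc1 : (1 : ℝ) ≤ c := by exact_mod_cast hc
  set x := A ^ (j + 2 * c + 2) / (j + 2 * c + 2)!
  set y := A ^ (j + 1) / (j + 1)!
  set α := A / (k + c + 1)
  set β := (j + 1) / A
  set δ := (c : ℝ) ^ 2 / (k : ℝ) ^ 2
  have hy : 0 < y := by positivity
  have hxy : (1 + δ) * y ≤ x := by
    have h := one_add_sq_div_sq_mul_pow_div_factorial_le (show c < k by omega) hkA
    rwa [show k - c - 1 = j + 1 by omega, show k + c = j + 2 * c + 2 by omega] at h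
  have hx' : A ^ (j + 2 * c + 3) / (j + 2 * c + 3)! = x * α := by
    simp only [x, α, factorial_succ (j + 2 * c + 2), pow_succ, hkR]
    push_cast
    field_simp
    ring
  have hy' : A ^ j / j ! = y * β := by
    simp only [y, β, factorial_succ j, pow_succ]
    push_cast
    field_simp
  have hα : α ≤ 2 := by
    rw [div_le_iff₀ (by positivity)]
    nlinarith
  -- `(k + c + 1) (j + 1) = k ^ 2 - (c + 1) ^ 2`, and the denominator `(k + c + 1) A` is `≥ k ^ 2`
  have hαβ : α - β ≤ (A ^ 2 - (k : ℝ) ^ 2 + ((c : ℝ) + 1) ^ 2) / (k : ℝ) ^ 2 := by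
    have hnum : 0 ≤ A ^ 2 - (k : ℝ) ^ 2 + ((c : ℝ) + 1) ^ 2 := by nlinarith
    rw [div_sub_div _ _ (by positivity) hA0.ne', show A * A - (k + c + 1) * (j + 1) =
      A ^ 2 - (k : ℝ) ^ 2 + ((c : ℝ) + 1) ^ 2 by rw [hkR]; ring]
    exact div_le_div_of_nonneg_left hnum (by positivity) (by nlinarith)
  have hB : 0 ≤ A ^ 2 - (k : ℝ) ^ 2 := by nlinarith
  have hQα : A ^ 2 - (k : ℝ) ^ 2 + 5 ≤ Q - α := by linarith
  have hgap : α - β < (Q - α) * δ := by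
    refine hαβ.trans_lt ?_
    rw [mul_div_assoc', div_lt_div_iff_of_pos_right (by positivity)]
    nlinarith [mul_le_mul_of_nonneg_right hQα (sq_nonneg (c : ℝ)),
      mul_nonneg hB (by nlinarith : (0 : ℝ) ≤ (c : ℝ) ^ 2 - 1)]
  rw [hx', hy']
  calc x * α - y * β = Q * (x - y) - ((Q - α) * x - (Q - β) * y) := by ring
    _ < Q * (x - y) := by
      nlinarith [mul_le_mul_of_nonneg_left hxy (by linarith : 0 ≤ Q - α),
        mul_lt_mul_of_pos_right hgap hy]

lemma succ_mul_sub_div_two {k n : ℕ} (h : n < k) :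
    (n + 1) * (2 * k - (n + 1) - 1) / 2 = n * (2 * k - n - 1) / 2 + (k - n - 1) := by
  obtain ⟨d, rfl⟩ : ∃ d, k = n + d + 1 := ⟨k - n - 1, by omega⟩
  rw [show 2 * (n + d + 1) - (n + 1) - 1 = n + 2 * d by omega,
    show 2 * (n + d + 1) - n - 1 = n + 2 * d + 1 by omega, show n + d + 1 - n - 1 = d by omega,
    show (n + 1) * (n + 2 * d) = n * (n + 2 * d + 1) + d * 2 by ring,
    Nat.add_mul_div_right _ _ two_pos]

lemma reflect_mul_sub_div_two {k n : ℕ} (h : n < 2 * k) :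
    (2 * k - n - 1) * (2 * k - (2 * k - n - 1) - 1) / 2 = n * (2 * k - n - 1) / 2 := by
  rw [show 2 * k - (2 * k - n - 1) - 1 = n by omega, Nat.mul_comm]

lemma reflect_sub_lt_reflect_sub_succ {q A : ℝ} {k j : ℕ} {w : ℕ → ℝ}
    (hw : ∀ n, w n = A ^ n / n ! * (q ^ (n * (2 * k - n - 1) / 2))⁻¹) (hq : 0 < q)
    (hjk : j + 3 ≤ k) (hkA : (k : ℝ) ≤ A) (hA : A ≤ 2 * k)
    (hQ : A ^ 2 - (k : ℝ) ^ 2 + 7 ≤ q⁻¹ ^ (k - j - 1)) :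
    w (2 * k - j - 1) - w j < w (2 * k - (j + 1) - 1) - w (j + 1) := by
  simp only [hw, reflect_mul_sub_div_two (show j < 2 * k by omega),
    reflect_mul_sub_div_two (show j + 1 < 2 * k by omega),
    succ_mul_sub_div_two (show j < k by omega), pow_add q, mul_inv, ← inv_pow]
  generalize j * (2 * k - j - 1) / 2 = e
  obtain ⟨c, rfl⟩ : ∃ c, k = j + c + 2 := ⟨k - j - 2, by omega⟩
  rw [show j + c + 2 - j - 1 = c + 1 by omega] at hQ ⊢
  rw [show 2 * (j + c + 2) - j - 1 = j + 2 * c + 3 by omega,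
    show 2 * (j + c + 2) - (j + 1) - 1 = j + 2 * c + 2 by omega]
  have key := mul_lt_mul_of_pos_right (pow_div_factorial_sub_lt rfl (by omega) hkA hA hQ)
    (pow_pos (inv_pos.2 hq) e)
  linarith

lemma eventually_le_pow_of_one_lt {r : ℝ} (hr : 1 < r) (B : ℝ) :
    ∀ᶠ N : ℕ in atTop, 3 ≤ N ∧ (N : ℝ) ≤ r ^ N ∧ B ≤ r ^ (N - 1) := by
  have hlin : ∀ᶠ N : ℕ in atTop, (N : ℝ) ^ 1 / r ^ N < 1 :=
    (tendsto_pow_const_div_const_pow_of_one_lt 1 hr).eventually (gt_mem_nhds one_pos)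
  have hB : ∀ᶠ N : ℕ in atTop, B ≤ r ^ (N - 1) :=
    ((tendsto_pow_atTop_atTop_of_one_lt hr).comp (tendsto_sub_atTop_nat 1)).eventually_ge_atTop B
  filter_upwards [eventually_ge_atTop 3, hlin, hB] with N h3 hN hBN
  rw [pow_one, div_lt_one (pow_pos (zero_lt_one.trans hr) N)] at hN
  exact ⟨h3, hN.le, hBN⟩

lemma sq_add_div_sub_sq_le {k a K : ℝ} (hk : 1 ≤ k) (ha : 0 ≤ a) (haK : a ≤ K) :
    (k + a / k) ^ 2 - k ^ 2 ≤ 2 * K + K ^ 2 := by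
  have hak : a / k ≤ a := div_le_self ha hk
  have hak0 : 0 ≤ a / k := div_nonneg ha (by linarith)
  have : (k + a / k) ^ 2 - k ^ 2 = 2 * a + (a / k) ^ 2 := by field_simp; ring
  nlinarith

theorem stmt6_general (q : ℝ) (hq0 : 0 < q) (hq1 : q < 1) (a0 C : ℝ) (hC : 0 ≤ C)
    (a : ℕ → ℝ) (hapos : ∀ k : ℕ, 1 ≤ k → 0 < a k)
    (haC : ∀ k : ℕ, 1 ≤ k → |a k - a0| ≤ C / (k : ℝ))
    (u : ℕ → ℕ → ℝ)
    (hu : ∀ k n : ℕ,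
      u k n = ((k : ℝ) + a k / (k : ℝ)) ^ n / (n.factorial : ℝ) *
        (q ^ (n * (2 * k - n - 1) / 2))⁻¹)
    (v : ℕ → ℕ → ℝ) (hv : ∀ k j : ℕ, v k j = u k (2 * k - j - 1) - u k j) :
    ∃ N0 : ℕ, 0 < N0 ∧ ∀ N : ℕ, N0 ≤ N → ∀ k : ℕ, (q⁻¹) ^ (3 * N) ≤ (k : ℝ) →
      ∀ j : ℕ, j ≤ k - N → v k j < v k (j + 1) := by
  have hr : 1 < q⁻¹ := (one_lt_inv₀ hq0).2 hq1
  set K := a0 + C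
  obtain ⟨N0, hN0⟩ := eventually_atTop.1 (eventually_le_pow_of_one_lt hr (2 * K + K ^ 2 + 7))
  refine ⟨N0, by have := (hN0 N0 le_rfl).1; omega, fun N hN k hk j hj => ?_⟩
  obtain ⟨h3N, hNr, hKr⟩ := hN0 N hN
  have hNk : N ≤ k := by
    exact_mod_cast hNr.trans ((pow_le_pow_right₀ hr.le (by omega)).trans hk)
  have hKk : 2 * K + K ^ 2 + 7 ≤ k := hKr.trans ((pow_le_pow_right₀ hr.le (by omega)).trans hk)
  have hk1 : (1 : ℝ) ≤ k := by exact_mod_cast (show 1 ≤ k by omega)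
  have hak : 0 < a k := hapos k (by omega)
  have haK : a k ≤ K := by
    linarith [(abs_le.1 (haC k (by omega))).2, div_le_self hC hk1]
  rw [hv, hv]
  refine reflect_sub_lt_reflect_sub_succ (hu k) hq0 (by omega) ?_ ?_ ?_
  · exact le_add_of_nonneg_right (by positivity)
  · have : a k / k ≤ k := (div_le_self hak.le hk1).trans (by nlinarith)
    linarith
  · linarith [sq_add_div_sub_sq_le hk1 hak.le haK,
      hKr.trans (pow_le_pow_right₀ hr.le (show N - 1 ≤ k - j - 1 by omega))]

theorem stmt6 (q : ℝ) (hq0 : 0 < q) (hq1 : q < 1) (a0 C : ℝ) (ha0 : 0 < a0) (hC : 0 ≤ C)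
    (a : ℕ → ℝ) (hapos : ∀ k : ℕ, 1 ≤ k → 0 < a k)
    (haC : ∀ k : ℕ, 1 ≤ k → |a k - a0| ≤ C / (k : ℝ))
    (u : ℕ → ℕ → ℝ)
    (hu : ∀ k n : ℕ,
      u k n = ((k : ℝ) + a k / (k : ℝ)) ^ n / (n.factorial : ℝ) *
        (q ^ (n * (2 * k - n - 1) / 2))⁻¹)
    (v : ℕ → ℕ → ℝ) (hv : ∀ k j : ℕ, v k j = u k (2 * k - j - 1) - u k j) :
    ∃ N0 : ℕ, 0 < N0 ∧ ∀ N : ℕ, N0 ≤ N → ∀ k : ℕ, (q⁻¹) ^ (3 * N) ≤ (k : ℝ) →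
      ∀ j : ℕ, j ≤ k - N → v k j < v k (j + 1) :=
  stmt6_general q hq0 hq1 a0 C hC a hapos haC u hu v hv
end

section
/- Fix an integer n≥1. There exist polynomials S_0, S_1, …, S_n in the variables y_0, …, y_{n−2} with rational coefficients (independent of j and of the sequence (a_i)) with the following property: for every integer j≥1 and every sequence (a_i)_{i≥0} of real numbers, letting a(x) := Σ_{i=0}^∞ a_i x^i ∈ ℝ[[x]], G(x) := (1 + a(x)x²)^j · Π_{i=0}^{j−1} (1 + i x)^{−1} ∈ ℝ[[x]], and H(x) := (Π_{i=1}^{j−1} (1 − i x)) · (1 + a(x)x²)^{−(j−1)} ∈ ℝ[[x]], the power series G − H is divisible by x², and the coefficient of x^{n−1} in ((G(x) − H(x))/x²)·(1 + a(x)x²) equals (2j−1)·( a_{n−1} + Σ_{i=0}^{n} S_i(a_0, …, a_{n−2}) (j(j−1))^i ). In particular, for n=1 one may take S_0 = 0 and S_1 = 1/6. -/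
/-!
For `j ∈ ℤ` let `Φ_j := (1 + a x²)^j ∏_{0 ≤ i < j} (1 + i x)⁻¹`, products over negative ranges being
read through the recurrence `Φ_{j+1} (1 + j x) = Φ_j (1 + a x²)`. Then `G = Φ_j` and
`H = Φ_{1-j}`. By the recurrence, the forward difference in `j` of `[x^m] Φ_j` is a polynomial
in `j` of degree `≤ 2m - 1`, so `[x^m] Φ_j` is a polynomial in `j` of degree `≤ 2m`. Hence
`[x^{n+1}] ((G - H)(1 + a x²)) = P(j) - P(1 - j)` with `deg P ≤ 2n + 2`, and a polynomial that is
odd under `j ↦ 1 - j` has the form `(2j - 1) r(j² - j)`, here with `deg r ≤ n`. Running this for the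
generic series `a_i = X_i` over `ℚ[X_0, X_1, …]` makes the coefficients of `r` rational polynomials
in the `a_i`.

Only `a_0, …, a_{n-1}` occur, and `a_{n-1}` only linearly: with `A = 1 + a x²`,
`(G - H) A = A^{j+1} ∏ (1 + i x)⁻¹ - A^{2-j} ∏ (1 - i x)`, and changing `a_{n-1}` changes `A` by a
multiple of `x^{n+1}`, hence the coefficient of `x^{n+1}` by `((j + 1) - (2 - j)) Δa_{n-1}`. Setting
`a_t = 0` for `t ≥ n - 1` therefore yields the `S_i`. For `n = 1`, evaluating at `a = 0` and
`j = 1, 2` gives `S_0 = 0` and `S_1 = 1/6`.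
-/

/-- `G(x) = (1 + a(x)x²)^j · Π_{i=0}^{j-1} (1 + i x)⁻¹` in `ℝ⟦x⟧`,
where `a(x) = Σ a_i x^i`. -/
noncomputable def Gser (j : ℕ) (a : ℕ → ℝ) : PowerSeries ℝ :=
  (1 + PowerSeries.mk a * PowerSeries.X ^ 2) ^ j *
    ∏ i ∈ Finset.range j, (1 + PowerSeries.C (i : ℝ) * PowerSeries.X)⁻¹

/-- `H(x) = (Π_{i=1}^{j-1} (1 - i x)) · ((1 + a(x)x²)^{j-1})⁻¹` in `ℝ⟦x⟧`. -/
noncomputable def Hser (j : ℕ) (a : ℕ → ℝ) : PowerSeries ℝ :=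
  (∏ i ∈ Finset.Icc 1 (j - 1), (1 - PowerSeries.C (i : ℝ) * PowerSeries.X)) *
    ((1 + PowerSeries.mk a * PowerSeries.X ^ 2) ^ (j - 1))⁻¹

open Finset

namespace Polynomial

variable {R : Type*} [CommRing R]

theorem natDegree_bernoulli_le (n : ℕ) : (bernoulli n).natDegree ≤ n :=
  natDegree_le_iff_coeff_eq_zero.mpr fun i hi => by
    rw [coeff_bernoulli, if_neg (by exact_mod_cast hi.not_ge)]

theorem exists_comp_X_add_one_eq_add [Algebra ℚ R] (q : R[X]) :
    ∃ p : R[X], p.natDegree ≤ q.natDegree + 1 ∧ p.comp (X + 1) = p + q := by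
  set B : ℕ → R[X] := fun m => (bernoulli m).map (algebraMap ℚ R)
  have hB (m : ℕ) : (B (m + 1)).comp (X + 1) = B (m + 1) + ((m : ℚ) + 1) • X ^ m := by
    have := congrArg (map (algebraMap ℚ R)) (bernoulli_comp_one_add_X (m + 1))
    simp only [map_comp, Polynomial.map_add, Polynomial.map_one, map_X,
      add_tsub_cancel_right] at this
    rw [add_comm X, this, nsmul_eq_mul, Algebra.smul_def]
    simp [B]
  refine ⟨∑ m ∈ range (q.natDegree + 1), C (q.coeff m) * (((m : ℚ) + 1)⁻¹ • B (m + 1)), ?_, ?_⟩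
  · refine natDegree_sum_le_of_forall_le _ _ fun m hm => ?_
    refine (natDegree_C_mul_le _ _).trans ((natDegree_smul_le _ _).trans ?_)
    exact natDegree_map_le.trans ((natDegree_bernoulli_le _).trans (by simpa using hm))
  · conv_rhs => arg 2; rw [q.as_sum_range_C_mul_X_pow]
    simp only [sum_comp, mul_comp, C_comp, smul_comp, hB, ← sum_add_distrib]
    refine sum_congr rfl fun m _ => ?_
    rw [smul_add, smul_smul, inv_mul_cancel₀ (by positivity), one_smul]
    ring

theorem exists_eq_comp_X_sq_sub_X_add_X_mul (Q : R[X]) :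
    ∃ u w : R[X], Q = u.comp (X ^ 2 - X) + X * w.comp (X ^ 2 - X) := by
  nontriviality R
  set t : R[X] := X ^ 2 - X
  have ht2 : t.natDegree = 2 := by simp only [t]; compute_degree!
  have ht : t.Monic := by simp only [t]; monicity!
  have hlin (p : R[X]) (hp : p.natDegree < 2) :
      p = (C (p.coeff 0)).comp t + X * (C (p.coeff 1)).comp t := by
    conv_lhs => rw [eq_X_add_C_of_natDegree_le_one (p := p) (by omega)]
    rw [C_comp, C_comp]
    ring
  induction hd : Q.natDegree using Nat.strong_induction_on generalizing Q with
  | _ d ih =>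
  by_cases hQ : d < 2
  · exact ⟨_, _, hlin Q (hd ▸ hQ)⟩
  obtain ⟨u, w, huw⟩ := ih (d - 2) (by omega) (Q /ₘ t) (by rw [natDegree_divByMonic _ ht, hd, ht2])
  have hrem := hlin (Q %ₘ t) (ht2 ▸ natDegree_modByMonic_lt Q ht (by rintro h; simp [h] at ht2))
  refine ⟨C ((Q %ₘ t).coeff 0) + X * u, C ((Q %ₘ t).coeff 1) + X * w, ?_⟩
  conv_lhs => rw [← modByMonic_add_div Q t, hrem, huw]
  simp only [add_comp, mul_comp, X_comp]
  ring

theorem exists_eq_two_mul_X_sub_one_mul_comp {Q : R[X]} (hQ : Q.comp (1 - X) = -Q) :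
    ∃ r : R[X], Q = (2 * X - 1) * r.comp (X ^ 2 - X) := by
  obtain ⟨u, w, rfl⟩ := exists_eq_comp_X_sq_sub_X_add_X_mul Q
  have ht : (X ^ 2 - X : R[X]).comp (1 - X) = X ^ 2 - X := by
    simp only [sub_comp, pow_comp, X_comp]
    ring
  -- `Q + Q ∘ (1 - X) = (2u + w) ∘ (X² - X)`, so no division by 2 is needed.
  have hw : w.comp (X ^ 2 - X) = -2 * u.comp (X ^ 2 - X) := by
    simp only [add_comp, mul_comp, comp_assoc, ht, X_comp] at hQ
    linear_combination hQ
  exact ⟨-u, by rw [hw, neg_comp]; ring⟩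

theorem natDegree_two_mul_X_sub_one_mul_comp [IsDomain R] [CharZero R] {r : R[X]} (hr : r ≠ 0) :
    ((2 * X - 1) * r.comp (X ^ 2 - X)).natDegree = 2 * r.natDegree + 1 := by
  have ht2 : (X ^ 2 - X : R[X]).natDegree = 2 := by compute_degree!
  have hl : (2 * X - 1 : R[X]).natDegree = 1 := by compute_degree!
  have hc : r.comp (X ^ 2 - X) ≠ 0 := by
    intro h
    have := congrArg leadingCoeff h
    rw [leadingCoeff_comp (by omega), leadingCoeff_zero] at this
    simp_all
  rw [natDegree_mul (by rintro h; simp [h] at hl) hc, natDegree_comp, hl, ht2]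
  ring

end Polynomial

def IsPolyOnInt {R : Type*} [CommRing R] (d : ℕ) (f : ℤ → R) : Prop :=
  ∃ p : Polynomial R, p.natDegree ≤ d ∧ ∀ j : ℤ, f j = p.eval (j : R)

namespace IsPolyOnInt

open Polynomial

variable {R : Type*} [CommRing R] {d e : ℕ} {f g : ℤ → R}

theorem const (c : R) : IsPolyOnInt 0 fun _ => c :=
  ⟨C c, by simp, fun _ => by simp⟩

theorem mono (hf : IsPolyOnInt d f) (hde : d ≤ e) : IsPolyOnInt e f :=
  let ⟨p, hp, hfp⟩ := hf
  ⟨p, hp.trans hde, hfp⟩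

theorem add (hf : IsPolyOnInt d f) (hg : IsPolyOnInt d g) : IsPolyOnInt d (f + g) :=
  let ⟨p, hp, hfp⟩ := hf
  let ⟨q, hq, hgq⟩ := hg
  ⟨p + q, (natDegree_add_le _ _).trans (max_le hp hq), fun j => by simp [hfp, hgq]⟩

theorem neg (hf : IsPolyOnInt d f) : IsPolyOnInt d (-f) :=
  let ⟨p, hp, hfp⟩ := hf
  ⟨-p, by rwa [natDegree_neg], fun j => by simp [hfp]⟩

theorem sub (hf : IsPolyOnInt d f) (hg : IsPolyOnInt d g) : IsPolyOnInt d (f - g) := by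
  simpa only [sub_eq_add_neg] using hf.add hg.neg

theorem sum {ι : Type*} (s : Finset ι) {f : ι → ℤ → R} (hf : ∀ i ∈ s, IsPolyOnInt d (f i)) :
    IsPolyOnInt d fun j => ∑ i ∈ s, f i j := by
  rw [← Finset.sum_fn]
  exact Finset.sum_induction _ (IsPolyOnInt d) (fun _ _ => add) ((const 0).mono (Nat.zero_le _)) hf

theorem mul_const (hf : IsPolyOnInt d f) (c : R) : IsPolyOnInt d fun j => f j * c :=
  let ⟨p, hp, hfp⟩ := hf
  ⟨p * C c, (natDegree_mul_C_le _ _).trans hp, fun j => by simp [hfp]⟩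

theorem intCast_mul (hf : IsPolyOnInt d f) : IsPolyOnInt (d + 1) fun j => (j : R) * f j :=
  let ⟨p, hp, hfp⟩ := hf
  ⟨X * p, natDegree_mul_le.trans (by grind [natDegree_X_le]), fun j => by simp [hfp]⟩

theorem comp_add_one (hf : IsPolyOnInt d f) : IsPolyOnInt d fun j => f (j + 1) :=
  let ⟨p, hp, hfp⟩ := hf
  have h1 : (X + 1 : R[X]).natDegree ≤ 1 := by compute_degree
  ⟨p.comp (X + 1), natDegree_comp_le.trans (by nlinarith), fun j => by simp [hfp]⟩

theorem of_sub [Algebra ℚ R] (hf : IsPolyOnInt d fun j => f (j + 1) - f j) :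
    IsPolyOnInt (d + 1) f := by
  obtain ⟨q, hq, hfq⟩ := hf
  obtain ⟨p, hp, hpq⟩ := exists_comp_X_add_one_eq_add q
  refine ⟨p + C (f 0 - p.eval 0), natDegree_add_C.le.trans (hp.trans (by omega)), fun j => ?_⟩
  have hper : Function.Periodic (fun j => f j - p.eval (j : R)) 1 := fun j => by
    have := congrArg (eval (j : R)) hpq
    simp only [eval_comp, eval_add, eval_X, eval_one] at this
    simp only [Int.cast_add, Int.cast_one, this, ← hfq j]
    ring
  have := hper.int_mul_eq j
  simp only [mul_one, Int.cast_zero] at this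
  simp only [eval_add, eval_C]
  linear_combination this

theorem exists_sub_comp_one_sub [IsDomain R] [CharZero R] {N : ℕ}
    (hf : IsPolyOnInt (2 * N + 2) f) :
    ∃ r : R[X], r.natDegree ≤ N ∧
      ∀ j : ℤ, f j - f (1 - j) = (2 * j - 1) * r.eval ((j : R) ^ 2 - j) := by
  obtain ⟨p, hp, hfp⟩ := hf
  have hQ : (p - p.comp (1 - X)).comp (1 - X) = -(p - p.comp (1 - X)) := by
    simp only [sub_comp, comp_assoc, one_comp, X_comp, sub_sub_cancel, comp_X]
    ring
  obtain ⟨r, hr⟩ := exists_eq_two_mul_X_sub_one_mul_comp hQ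
  refine ⟨r, ?_, fun j => ?_⟩
  · rcases eq_or_ne r 0 with rfl | hr0
    · simp
    have h1 : (1 - X : R[X]).natDegree ≤ 1 := by compute_degree
    have hdeg : (p - p.comp (1 - X)).natDegree ≤ 2 * N + 2 :=
      (natDegree_sub_le _ _).trans (max_le hp (natDegree_comp_le.trans (by nlinarith)))
    rw [hr, natDegree_two_mul_X_sub_one_mul_comp hr0] at hdeg
    omega
  · have := congrArg (eval (j : R)) hr
    simp only [eval_sub, eval_comp, eval_mul, eval_X, eval_one, eval_pow, eval_ofNat] at this
    rw [hfp, hfp, Int.cast_sub, Int.cast_one, this]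

end IsPolyOnInt

namespace PowerSeries

variable {R : Type*} [CommRing R] {N : ℕ}

theorem coeff_mul_of_X_pow_dvd {d : R⟦X⟧} (h : X ^ N ∣ d) (w : R⟦X⟧) :
    coeff N (d * w) = coeff N d * constantCoeff w := by
  obtain ⟨e, rfl⟩ := h
  simp only [mul_assoc, coeff_X_pow_mul', le_refl, if_true, Nat.sub_self,
    coeff_zero_eq_constantCoeff_apply, map_mul]

theorem X_pow_dvd_mul_sub_mul_and_coeff {u v w z : R⟦X⟧} (huv : X ^ N ∣ u - v)
    (hwz : X ^ N ∣ w - z) :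
    X ^ N ∣ u * w - v * z ∧ coeff N (u * w - v * z) =
      coeff N (u - v) * constantCoeff w + constantCoeff v * coeff N (w - z) := by
  have h : u * w - v * z = (u - v) * w + (w - z) * v := by ring
  rw [h, map_add, coeff_mul_of_X_pow_dvd huv, coeff_mul_of_X_pow_dvd hwz]
  exact ⟨dvd_add (huv.mul_right _) (hwz.mul_right _), by ring⟩

theorem X_pow_dvd_pow_sub_pow_and_coeff {u v : R⟦X⟧} (h : X ^ N ∣ u - v) (hu : constantCoeff u = 1)
    (hv : constantCoeff v = 1) (k : ℕ) :
    X ^ N ∣ u ^ k - v ^ k ∧ coeff N (u ^ k - v ^ k) = k * coeff N (u - v) := by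
  induction k with
  | zero => simp
  | succ k ih =>
    obtain ⟨hdvd, hcoeff⟩ := X_pow_dvd_mul_sub_mul_and_coeff ih.1 h
    refine ⟨by simpa [pow_succ] using hdvd, ?_⟩
    rw [pow_succ, pow_succ, hcoeff, ih.2, hu, map_pow, hv]
    push_cast
    ring

theorem X_pow_dvd_inv_sub_inv_and_coeff {k : Type*} [Field k] {u v : k⟦X⟧} (h : X ^ N ∣ u - v)
    (hu : constantCoeff u = 1) (hv : constantCoeff v = 1) :
    X ^ N ∣ u⁻¹ - v⁻¹ ∧ coeff N (u⁻¹ - v⁻¹) = -coeff N (u - v) := by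
  have hinv : u⁻¹ - v⁻¹ = -(u - v) * (u⁻¹ * v⁻¹) := by
    have h1 := PowerSeries.mul_inv_cancel u (by simp [hu])
    have h2 := PowerSeries.mul_inv_cancel v (by simp [hv])
    linear_combination v⁻¹ * h1 - u⁻¹ * h2
  rw [hinv, coeff_mul_of_X_pow_dvd (dvd_neg.mpr h), map_mul, constantCoeff_inv, constantCoeff_inv,
    hu, hv, map_neg]
  exact ⟨(dvd_neg.mpr h).mul_right _, by simp⟩

theorem mk_zero : mk (0 : ℕ → R) = 0 := by
  ext
  simp

theorem isUnit_one_add_C_mul_X (c : R) : IsUnit (1 + C c * X) :=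
  isUnit_iff_constantCoeff.mpr (by simp)

theorem isUnit_one_add_mul_X_sq (b : R⟦X⟧) : IsUnit (1 + b * X ^ 2) :=
  isUnit_iff_constantCoeff.mpr (by simp)

theorem val_inv_eq_inv_val {k : Type*} [Field k] (u : k⟦X⟧ˣ) :
    ((u⁻¹ : k⟦X⟧ˣ) : k⟦X⟧) = (u : k⟦X⟧)⁻¹ :=
  (eq_inv_iff_mul_eq_one (isUnit_iff_constantCoeff.mp u.isUnit).ne_zero).mpr u.inv_mul

end PowerSeries

open PowerSeries

section Recurrence

variable {R : Type*} [CommRing R]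

def SolvesRecurrence (b : R⟦X⟧) (f : ℤ → R⟦X⟧) : Prop :=
  ∀ j : ℤ, f (j + 1) * (1 + C (j : R) * X) = f j * (1 + b * X ^ 2)

namespace SolvesRecurrence

variable {b : R⟦X⟧} {f : ℤ → R⟦X⟧}

theorem coeff_zero (hf : SolvesRecurrence b f) (j : ℤ) : coeff 0 (f j) = coeff 0 (f 0) := by
  have hper : Function.Periodic (fun j => coeff 0 (f j)) 1 := fun j => by
    simpa using congrArg (coeff 0) (hf j)
  simpa using hper.int_mul_eq j

theorem coeff_succ_add_one (hf : SolvesRecurrence b f) (m : ℕ) (j : ℤ) :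
    coeff (m + 1) (f (j + 1)) = coeff (m + 1) (f j) - j * coeff m (f (j + 1)) +
      ∑ i ∈ range m, coeff i (f j) * coeff (m - 1 - i) b := by
  have h := congrArg (coeff (m + 1)) (hf j)
  have hX2 : coeff (m + 1) (f j * b * X ^ 2) =
      ∑ i ∈ range m, coeff i (f j) * coeff (m - 1 - i) b := by
    rcases m with _ | m
    · simp [coeff_mul_X_pow']
    · rw [show m + 1 + 1 = m + 2 by ring, coeff_mul_X_pow, coeff_mul,
        Nat.sum_antidiagonal_eq_sum_range_succ_mk]
      simp only [Nat.add_sub_cancel]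
  rw [mul_add, mul_one, mul_add, mul_one, map_add, map_add, ← mul_assoc (f j), hX2,
    show f (j + 1) * (C (j : R) * X) = C (j : R) * f (j + 1) * X by ring, coeff_succ_mul_X,
    coeff_C_mul] at h
  linear_combination h

theorem isPolyOnInt_coeff [Algebra ℚ R] (hf : SolvesRecurrence b f) (m : ℕ) :
    IsPolyOnInt (2 * m) fun j => coeff m (f j) := by
  induction m using Nat.strong_induction_on with
  | _ m ih =>
  rcases m with _ | m
  · rw [show (fun j => coeff 0 (f j)) = fun _ => coeff 0 (f 0) from funext hf.coeff_zero]
    exact .const _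
  refine IsPolyOnInt.of_sub (d := 2 * m + 1) ?_
  have hΔ : (fun j => coeff (m + 1) (f (j + 1)) - coeff (m + 1) (f j)) =
      fun j => (∑ i ∈ range m, coeff i (f j) * coeff (m - 1 - i) b) - j * coeff m (f (j + 1)) := by
    funext j
    rw [hf.coeff_succ_add_one]
    ring
  rw [hΔ]
  refine .sub (.sum _ fun i hi => ((ih i (by simp at hi; omega)).mul_const _).mono ?_)
    ((ih m (by omega)).comp_add_one.intCast_mul.mono (by omega))
  simp at hi
  omega

theorem coeff_one_sub (hf : SolvesRecurrence b f) {m : ℕ} (hm : m < 2) (j : ℤ) :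
    coeff m (f (1 - j)) = coeff m (f j) := by
  interval_cases m
  · rw [hf.coeff_zero, hf.coeff_zero j]
  have h1 (j : ℤ) : coeff 1 (f (j + 1)) = coeff 1 (f j) - j * coeff 0 (f 0) := by
    simpa [hf.coeff_zero (j + 1)] using hf.coeff_succ_add_one 0 j
  have hper : Function.Periodic (fun j => coeff 1 (f (1 - j)) - coeff 1 (f j)) 1 := fun j => by
    have h := h1 (-j)
    rw [neg_add_eq_sub] at h
    simp only [h1 j, show 1 - (j + 1) = -j by ring]
    push_cast at h
    linear_combination -h
  have hzero : coeff 1 (f 1) = coeff 1 (f 0) := by simpa using h1 0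
  simpa [hzero, sub_eq_zero] using hper.int_mul_eq j

end SolvesRecurrence

end Recurrence

section IntProd

variable {M N : Type*} [CommGroup M] [CommGroup N]

def intProd (g : ℤ → M) : ℤ → M
  | (k : ℕ) => ∏ i ∈ range k, g i
  | Int.negSucc k => (∏ i ∈ range (k + 1), g (-(i + 1)))⁻¹

theorem intProd_natCast (g : ℤ → M) (k : ℕ) : intProd g k = ∏ i ∈ range k, g i := rfl

theorem intProd_neg_natCast (g : ℤ → M) (k : ℕ) :
    intProd g (-k) = (∏ i ∈ range k, g (-(i + 1)))⁻¹ := by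
  rcases k with _ | k
  · exact inv_one.symm
  · rfl

theorem intProd_add_one (g : ℤ → M) (j : ℤ) : intProd g (j + 1) = intProd g j * g j := by
  rcases j with k | k
  · exact prod_range_succ _ k
  rcases k with _ | k
  · simp [intProd, Int.negSucc_eq]
  · rw [show Int.negSucc (k + 1) + 1 = -((k + 1 : ℕ) : ℤ) by omega, intProd_neg_natCast]
    simp [intProd, prod_range_succ _ (k + 1), Int.negSucc_eq]

theorem map_intProd (φ : M →* N) (g : ℤ → M) (j : ℤ) : φ (intProd g j) = intProd (φ ∘ g) j := by
  rcases j with k | k <;> simp [intProd, map_prod]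

end IntProd

section GSeq

variable {R S : Type*} [CommRing R] [CommRing S]

noncomputable def gSeq (b : R⟦X⟧) : ℤ → R⟦X⟧ˣ :=
  intProd fun i => (isUnit_one_add_mul_X_sq b).unit * (isUnit_one_add_C_mul_X (i : R)).unit⁻¹

theorem solvesRecurrence_gSeq (b : R⟦X⟧) : SolvesRecurrence b fun j => (gSeq b j : R⟦X⟧) := by
  intro j
  simp only [gSeq, intProd_add_one, Units.val_mul, IsUnit.unit_spec]
  rw [mul_assoc, mul_assoc, IsUnit.val_inv_mul, mul_one]

theorem map_gSeq (φ : R →+* S) (b : R⟦X⟧) (j : ℤ) :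
    map φ (gSeq b j : R⟦X⟧) = gSeq (map φ b) j := by
  have := congrArg Units.val (map_intProd (Units.map (map φ).toMonoidHom) (fun i : ℤ =>
    (isUnit_one_add_mul_X_sq b).unit * (isUnit_one_add_C_mul_X (i : R)).unit⁻¹) j)
  rw [gSeq, ← MonoidHom.coe_coe, ← Units.coe_map]
  refine this.trans ?_
  rw [gSeq]
  congr 2
  funext i
  rw [Function.comp_apply, map_mul, map_inv]
  congr 2 <;> ext1 <;> simp

variable {k : Type*} [Field k]

theorem gSeq_natCast (b : k⟦X⟧) (j : ℕ) :
    (gSeq b j : k⟦X⟧) = (1 + b * X ^ 2) ^ j * ∏ i ∈ range j, (1 + C (i : k) * X)⁻¹ := by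
  simp only [gSeq, intProd_natCast, prod_mul_distrib, prod_const, card_range, Units.val_mul,
    Units.val_pow_eq_pow_val, Units.coe_prod, val_inv_eq_inv_val, IsUnit.unit_spec,
    Int.cast_natCast]

theorem gSeq_neg_natCast (b : k⟦X⟧) (j : ℕ) :
    (gSeq b (-j) : k⟦X⟧) = (∏ i ∈ Icc 1 j, (1 - C (i : k) * X)) * ((1 + b * X ^ 2) ^ j)⁻¹ := by
  rw [gSeq, intProd_neg_natCast, ← prod_inv_distrib]
  simp only [mul_inv, inv_inv, inv_pow, prod_mul_distrib, prod_const, card_range, Units.val_mul,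
    Units.val_pow_eq_pow_val, Units.coe_prod, val_inv_eq_inv_val, IsUnit.unit_spec]
  rw [mul_comm, ← Ico_add_one_right_eq_Icc, prod_Ico_eq_prod_range, Nat.add_sub_cancel]
  congr 1
  refine prod_congr rfl fun i _ => ?_
  rw [show ((-((i : ℤ) + 1) : ℤ) : k) = -((1 + i : ℕ) : k) by push_cast; ring, map_neg]
  ring

end GSeq

theorem Gser_eq_gSeq (j : ℕ) (a : ℕ → ℝ) : Gser j a = gSeq (mk a) j :=
  (gSeq_natCast _ _).symm

theorem Hser_eq_gSeq {j : ℕ} (hj : 1 ≤ j) (a : ℕ → ℝ) : Hser j a = gSeq (mk a) (1 - j) := by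
  rw [show (1 - j : ℤ) = -((j - 1 : ℕ) : ℤ) by omega, gSeq_neg_natCast, Hser]

theorem X_sq_dvd_Gser_sub_Hser {j : ℕ} (hj : 1 ≤ j) (a : ℕ → ℝ) : X ^ 2 ∣ Gser j a - Hser j a := by
  rw [Gser_eq_gSeq, Hser_eq_gSeq hj, X_pow_dvd_iff]
  intro m hm
  rw [map_sub, sub_eq_zero]
  exact ((solvesRecurrence_gSeq (mk a)).coeff_one_sub hm j).symm

theorem coeff_Gser_sub_Hser_mul_sub {N j : ℕ} (hj : 1 ≤ j) {a a' : ℕ → ℝ}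
    (h : ∀ t < N, a t = a' t) :
    coeff (N + 2) ((Gser j a - Hser j a) * (1 + mk a * X ^ 2)) -
        coeff (N + 2) ((Gser j a' - Hser j a') * (1 + mk a' * X ^ 2)) =
      (2 * j - 1) * (a N - a' N) := by
  set u : ℝ⟦X⟧ := 1 + mk a * X ^ 2
  set v : ℝ⟦X⟧ := 1 + mk a' * X ^ 2
  have hu : constantCoeff u = 1 := by simp [u]
  have hv : constantCoeff v = 1 := by simp [v]
  have huv : u - v = mk (fun t => a t - a' t) * X ^ 2 := by
    simp only [u, v]
    rw [show mk (fun t => a t - a' t) = mk a - mk a' by ext; simp]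
    ring
  have hdvd : X ^ (N + 2) ∣ u - v := by
    rw [huv, pow_add]
    exact mul_dvd_mul_right (X_pow_dvd_iff.mpr fun m hm => by simp [h m hm]) _
  have hδ : coeff (N + 2) (u - v) = a N - a' N := by rw [huv, coeff_mul_X_pow, coeff_mk]
  set P : ℝ⟦X⟧ := ∏ i ∈ range j, (1 + C (i : ℝ) * X)⁻¹
  set Q : ℝ⟦X⟧ := ∏ i ∈ Icc 1 (j - 1), (1 - C (i : ℝ) * X)
  have hP : constantCoeff P = 1 := by simp [P, map_prod]
  have hQ : constantCoeff Q = 1 := by simp [Q, map_prod]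
  have hsplit : (Gser j a - Hser j a) * u - (Gser j a' - Hser j a') * v =
      (u ^ (j + 1) - v ^ (j + 1)) * P - ((u ^ (j - 1))⁻¹ * u - (v ^ (j - 1))⁻¹ * v) * Q := by
    simp only [Gser, Hser, u, v, P, Q]
    ring
  obtain ⟨hpow, hpowδ⟩ := X_pow_dvd_pow_sub_pow_and_coeff hdvd hu hv (j + 1)
  obtain ⟨hpow', hpowδ'⟩ := X_pow_dvd_pow_sub_pow_and_coeff hdvd hu hv (j - 1)
  obtain ⟨hinv, hinvδ⟩ := X_pow_dvd_inv_sub_inv_and_coeff hpow' (by simp [hu]) (by simp [hv])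
  obtain ⟨hmul, hmulδ⟩ := X_pow_dvd_mul_sub_mul_and_coeff hinv hdvd
  rw [← map_sub, hsplit, map_sub, coeff_mul_of_X_pow_dvd hpow, coeff_mul_of_X_pow_dvd hmul, hpowδ,
    hmulδ, hinvδ, hpowδ', hδ, hP, hQ, hu, constantCoeff_inv, map_pow, hv]
  push_cast [hj]
  ring

theorem exists_coeff_Gser_sub_Hser_mul_eq (M : ℕ) :
    ∃ r : Polynomial (MvPolynomial ℕ ℚ), r.natDegree ≤ M ∧
      ∀ j : ℕ, 1 ≤ j → ∀ a : ℕ → ℝ,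
        coeff (M + 1) ((Gser j a - Hser j a) * (1 + mk a * X ^ 2)) =
          (2 * j - 1) * ∑ i ∈ range (M + 1),
            MvPolynomial.aeval a (r.coeff i) * ((j : ℝ) * (j - 1)) ^ i := by
  let b : (MvPolynomial ℕ ℚ)⟦X⟧ := mk MvPolynomial.X
  let f : ℤ → (MvPolynomial ℕ ℚ)⟦X⟧ := fun j => gSeq b j
  have hf : SolvesRecurrence b f := solvesRecurrence_gSeq b
  have hpoly : IsPolyOnInt (2 * M + 2) fun j => coeff (M + 1) (f j * (1 + b * X ^ 2)) := by
    simp only [coeff_mul, Nat.sum_antidiagonal_eq_sum_range_succ_mk]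
    exact .sum _ fun i hi => ((hf.isPolyOnInt_coeff i).mul_const _).mono
      (by simp at hi; omega)
  obtain ⟨r, hr, hrj⟩ := hpoly.exists_sub_comp_one_sub
  refine ⟨r, hr, fun j hj a => ?_⟩
  let φ : MvPolynomial ℕ ℚ →+* ℝ := (MvPolynomial.aeval a).toRingHom
  have hb : map φ b = mk a := by ext; simp [b, φ]
  have hA : map φ (1 + b * X ^ 2) = 1 + mk a * X ^ 2 := by simp [hb]
  rw [Gser_eq_gSeq, Hser_eq_gSeq hj, ← hA, ← hb, ← map_gSeq, ← map_gSeq, ← map_sub, ← map_mul,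
    coeff_map, sub_mul, map_sub]
  have hj' := hrj j
  simp only [f] at hj'
  rw [hj', Polynomial.eval_eq_sum_range' (n := M + 1) (by omega)]
  simp only [φ, map_mul, map_sub, map_sum, map_pow, map_ofNat, map_one, map_natCast,
    Int.cast_natCast, AlgHom.toRingHom_eq_coe, RingHom.coe_coe,
    show (j : ℝ) ^ 2 - j = j * (j - 1) by ring]

def SatisfiesCoeffIdentity (k : ℕ) (S : ℕ → MvPolynomial (Fin k) ℚ) : Prop :=
  ∀ j : ℕ, 1 ≤ j → ∀ a : ℕ → ℝ,
    coeff (k + 2) ((Gser j a - Hser j a) * (1 + mk a * X ^ 2)) =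
      (2 * j - 1) * (a k + ∑ i ∈ range (k + 2),
        MvPolynomial.aeval (fun t : Fin k => a t) (S i) * ((j : ℝ) * (j - 1)) ^ i)

theorem exists_satisfiesCoeffIdentity (k : ℕ) :
    ∃ S : ℕ → MvPolynomial (Fin k) ℚ, SatisfiesCoeffIdentity k S := by
  obtain ⟨r, -, hr⟩ := exists_coeff_Gser_sub_Hser_mul_eq (k + 1)
  set trunc : ℕ → MvPolynomial (Fin k) ℚ := fun t => if h : t < k then MvPolynomial.X ⟨t, h⟩ else 0
  refine ⟨fun i => MvPolynomial.bind₁ trunc (r.coeff i), fun j hj a => ?_⟩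
  set a₀ : ℕ → ℝ := fun t => if t < k then a t else 0
  have hpert := coeff_Gser_sub_Hser_mul_sub (N := k) hj (a := a) (a' := a₀)
    (fun t ht => by simp [a₀, ht])
  have htrunc (p : MvPolynomial ℕ ℚ) :
      MvPolynomial.aeval (fun t : Fin k => a t) (MvPolynomial.bind₁ trunc p) =
        MvPolynomial.aeval a₀ p := by
    rw [MvPolynomial.aeval_bind₁]
    refine congrArg (fun g => MvPolynomial.aeval g p) (funext fun t => ?_)
    by_cases ht : t < k <;> simp [trunc, a₀, ht]
  have ha₀ : a₀ k = 0 := by simp [a₀]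
  rw [ha₀, sub_zero] at hpert
  simp only [htrunc]
  linear_combination hpert + hr j hj a₀

theorem coeff_two_Gser_two_sub_Hser_two : coeff 2 (Gser 2 0 - Hser 2 0) = 1 := by
  have hG : Gser 2 0 = (1 + X)⁻¹ := by simp [Gser, PowerSeries.mk_zero, prod_range_succ]
  have hH : Hser 2 0 = 1 - X := by simp [Hser, PowerSeries.mk_zero]
  have hinv : (1 + X : ℝ⟦X⟧) * (1 + X)⁻¹ = 1 := PowerSeries.mul_inv_cancel _ (by simp)
  have hX2 : Gser 2 0 - Hser 2 0 = X ^ 2 * (1 + X)⁻¹ := by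
    rw [hG, hH]
    linear_combination (1 - X) * hinv
  rw [hX2, coeff_X_pow_mul', if_pos le_rfl, Nat.sub_self, coeff_zero_eq_constantCoeff_apply,
    constantCoeff_inv]
  simp

theorem SatisfiesCoeffIdentity.zero_eq_and_one_eq {S : ℕ → MvPolynomial (Fin 0) ℚ}
    (hS : SatisfiesCoeffIdentity 0 S) : S 0 = 0 ∧ S 1 = MvPolynomial.C (1 / 6) := by
  obtain ⟨c, hc⟩ : ∃ c : ℕ → ℚ, ∀ i, S i = MvPolynomial.C (c i) :=
    ⟨_, fun i => MvPolynomial.eq_C_of_isEmpty (S i)⟩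
  have hG1 : Gser 1 0 = 1 := by simp [Gser, PowerSeries.mk_zero]
  have hH1 : Hser 1 0 = 1 := by simp [Hser]
  have h1 := hS 1 le_rfl 0
  have h2 := hS 2 (by norm_num) 0
  simp only [hc, MvPolynomial.aeval_C, sum_range_succ, sum_range_zero, PowerSeries.mk_zero] at h1 h2
  norm_num [hG1, hH1] at h1
  norm_num [coeff_two_Gser_two_sub_Hser_two, ← h1] at h2
  have hc0 : c 0 = 0 := by exact_mod_cast h1.symm
  have hc1 : c 1 = 1 / 6 := Rat.cast_injective (α := ℝ) (by push_cast; linarith)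
  exact ⟨by rw [hc, hc0, map_zero], by rw [hc, hc1]⟩

theorem stmt7 (n : ℕ) (hn : 1 ≤ n) :
    ∃ S : ℕ → MvPolynomial (Fin (n - 1)) ℚ,
      (∀ j : ℕ, 1 ≤ j → ∀ a : ℕ → ℝ,
        (PowerSeries.X ^ 2 ∣ Gser j a - Hser j a) ∧
        (∀ D : PowerSeries ℝ, Gser j a - Hser j a = PowerSeries.X ^ 2 * D →
          PowerSeries.coeff (n - 1)
              (D * (1 + PowerSeries.mk a * PowerSeries.X ^ 2)) =
            (2 * (j : ℝ) - 1) *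
              (a (n - 1) + ∑ i ∈ Finset.range (n + 1),
                MvPolynomial.aeval (fun t : Fin (n - 1) => a (t : ℕ)) (S i) *
                  ((j : ℝ) * ((j : ℝ) - 1)) ^ i))) ∧
      (n = 1 → S 0 = 0 ∧ S 1 = MvPolynomial.C (1/6 : ℚ)) := by
  obtain ⟨k, rfl⟩ : ∃ k, n = k + 1 := ⟨n - 1, by omega⟩
  simp only [Nat.add_sub_cancel]
  obtain ⟨S, hS⟩ := exists_satisfiesCoeffIdentity k
  refine ⟨S, fun j hj a => ⟨X_sq_dvd_Gser_sub_Hser hj a, fun D hD => ?_⟩, fun hk => ?_⟩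
  · rw [← coeff_X_pow_mul _ 2 k, ← mul_assoc, ← hD]
    exact hS j hj a
  · obtain rfl : k = 0 := by omega
    exact hS.zero_eq_and_one_eq
end

section
/- For every integer n≥0 there exist polynomials p_n, r_n ∈ ℚ[X], each of degree at most 2n, such that p_n(j) = σ_n(j) and r_n(j) = Q_n(j) for all integers j≥1; these polynomials are unique, and they satisfy the identity r_n(1−X) = (−1)^n p_n(X) in ℚ[X]. -/
/-!
Since `σ_i(j) = e_i(0, 1, …, j - 1)`, adjoining `j` gives `σ_{n+1}(j+1) = σ_{n+1}(j) + j σ_n(j)`.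
So `σ_n` is interpolated by the polynomials with `p_0 = 1`, `p_{n+1}(x+1) - p_{n+1}(x) = x p_n(x)`,
`p_{n+1}(0) = 0`, which exist because every polynomial has an antidifference of one degree more
(Bernoulli polynomials). The `Q_k(j)` are the coefficients of `1 / ∏_{m<j} (1 + m t)`, hence
`Q_{n+1}(j) = Q_{n+1}(j+1) + j Q_n(j+1)`; the polynomials `r_n = (-1)^n p_n(1 - X)` satisfy the
same recurrence and vanish at `0`, so they interpolate `Q_n`. Uniqueness holds because a polynomial
is determined by its values at infinitely many points.
-/

/-- `σ_i(j) = Σ_{1 ≤ n_1 < ⋯ < n_i ≤ j-1} n_1 ⋯ n_i`, with `σ_0(j) = 1`. -/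
def sigmaP (i j : ℕ) : ℚ :=
  ∑ t ∈ (Finset.Icc 1 (j - 1)).powersetCard i, ∏ m ∈ t, (m : ℚ)

/-- `Q_0(j) = 1` and `Q_k(j) = -Σ_{i=1}^{k} σ_i(j) Q_{k-i}(j)` for `k ≥ 1`. -/
def QP (j : ℕ) : ℕ → ℚ
  | 0 => 1
  | k + 1 => -∑ i : Fin (k + 1), sigmaP (i + 1) j * QP j (k - i)
  termination_by k => k
  decreasing_by omega

open Polynomial Finset

theorem Multiset.esymm_cons_succ {R : Type*} [CommSemiring R] (a : R) (s : Multiset R) (n : ℕ) :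
    (a ::ₘ s).esymm (n + 1) = s.esymm (n + 1) + a * s.esymm n := by
  simp [Multiset.esymm, Multiset.powersetCard_cons, Multiset.sum_map_mul_left]

lemma sigmaP_zero_left (j : ℕ) : sigmaP 0 j = 1 := by simp [sigmaP]

lemma sigmaP_succ_zero (i : ℕ) : sigmaP (i + 1) 0 = 0 := by
  rw [sigmaP, Finset.powersetCard_eq_empty.2 (by simp), Finset.sum_empty]

lemma sigmaP_succ_succ (i j : ℕ) :
    sigmaP (i + 1) (j + 1) = sigmaP (i + 1) j + j * sigmaP i j := by
  rcases j with _ | j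
  · -- `0 - 1 = 0` in `ℕ`, so `σ_i(0) = σ_i(1)`
    simp [sigmaP]
  have hIcc : Icc 1 (j + 1) = insert (j + 1) (Icc 1 j) :=
    (Finset.insert_Icc_right_eq_Icc_add_one (by omega)).symm
  simp only [sigmaP, ← Finset.esymm_map_val, Nat.add_sub_cancel, hIcc,
    insert_val_of_notMem (show j + 1 ∉ Icc 1 j by simp), Multiset.map_cons,
    Multiset.esymm_cons_succ, Nat.cast_add, Nat.cast_one]

lemma mk_sigmaP_mul_mk_QP (j : ℕ) :
    PowerSeries.mk (sigmaP · j) * PowerSeries.mk (QP j) = 1 := by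
  ext (_ | k)
  · simp [sigmaP_zero_left, QP]
  · rw [PowerSeries.coeff_mul, Finset.Nat.sum_antidiagonal_succ]
    simp [QP, sigmaP_zero_left,
      Finset.Nat.sum_antidiagonal_eq_sum_range_succ fun a b => sigmaP (a + 1) j * QP j b,
      Fin.sum_univ_eq_sum_range fun i => sigmaP (i + 1) j * QP j (k - i)]

lemma mk_sigmaP_succ (j : ℕ) :
    PowerSeries.mk (sigmaP · (j + 1)) =
      (1 + PowerSeries.C (j : ℚ) * PowerSeries.X) * PowerSeries.mk (sigmaP · j) := by
  ext (_ | i)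
  · simp [sigmaP_zero_left]
  · simp only [PowerSeries.coeff_mk, add_mul, one_mul, mul_assoc, map_add,
      PowerSeries.coeff_C_mul, PowerSeries.coeff_succ_X_mul, sigmaP_succ_succ]

lemma mk_QP_eq_mul_mk_QP_succ (j : ℕ) :
    PowerSeries.mk (QP j) =
      (1 + PowerSeries.C (j : ℚ) * PowerSeries.X) * PowerSeries.mk (QP (j + 1)) := by
  have h := mk_sigmaP_mul_mk_QP j
  have h' := mk_sigmaP_mul_mk_QP (j + 1)
  rw [mk_sigmaP_succ] at h'
  linear_combination (1 + PowerSeries.C (j : ℚ) * PowerSeries.X) * PowerSeries.mk (QP (j + 1)) * h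
    - PowerSeries.mk (QP j) * h'

lemma QP_succ_eq (j n : ℕ) : QP j (n + 1) = QP (j + 1) (n + 1) + j * QP (j + 1) n := by
  simpa only [PowerSeries.coeff_mk, add_mul, one_mul, mul_assoc, map_add,
      PowerSeries.coeff_C_mul, PowerSeries.coeff_succ_X_mul] using
    congrArg (PowerSeries.coeff (n + 1)) (mk_QP_eq_mul_mk_QP_succ j)

lemma QP_zero_succ (n : ℕ) : QP 0 (n + 1) = 0 := by
  simp [QP, sigmaP_succ_zero]

lemma Polynomial.natDegree_bernoulli_le_s9 (n : ℕ) : (bernoulli n).natDegree ≤ n :=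
  natDegree_le_iff_coeff_eq_zero.2 fun i hi => by
    rw [coeff_bernoulli, if_neg (by exact_mod_cast hi.not_ge)]

-- `B_{k+1}(x + 1) - B_{k+1}(x) = (k + 1) x^k`
noncomputable def Polynomial.antidiff (q : ℚ[X]) : ℚ[X] :=
  ∑ k ∈ range (q.natDegree + 1), C (q.coeff k / (k + 1)) * Polynomial.bernoulli (k + 1)

lemma Polynomial.natDegree_antidiff_le (q : ℚ[X]) : (antidiff q).natDegree ≤ q.natDegree + 1 := by
  refine natDegree_sum_le_of_forall_le _ _ fun k hk => (natDegree_C_mul_le _ _).trans ?_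
  exact (natDegree_bernoulli_le_s9 _).trans (by simpa using Finset.mem_range.1 hk)

lemma Polynomial.eval_add_one_antidiff (q : ℚ[X]) (x : ℚ) :
    (antidiff q).eval (x + 1) = (antidiff q).eval x + q.eval x := by
  simp only [antidiff, eval_finsetSum, eval_mul, eval_C, add_comm x 1, bernoulli_eval_one_add,
    mul_add, Finset.sum_add_distrib, eval_eq_sum_range (p := q) x]
  congr 1
  refine Finset.sum_congr rfl fun k _ => ?_
  push_cast
  field_simp

noncomputable def sigmaPoly : ℕ → ℚ[X]
  | 0 => 1
  | n + 1 => antidiff (X * sigmaPoly n) - C ((antidiff (X * sigmaPoly n)).eval 0)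

lemma natDegree_sigmaPoly_le (n : ℕ) : (sigmaPoly n).natDegree ≤ 2 * n := by
  induction n with
  | zero => simp [sigmaPoly]
  | succ n ih =>
    rw [sigmaPoly, natDegree_sub_C]
    refine (natDegree_antidiff_le _).trans ?_
    have : (X * sigmaPoly n).natDegree ≤ 1 + 2 * n :=
      natDegree_mul_le.trans (by rw [natDegree_X]; omega)
    omega

lemma eval_add_one_sigmaPoly_succ (n : ℕ) (x : ℚ) :
    (sigmaPoly (n + 1)).eval (x + 1) = (sigmaPoly (n + 1)).eval x + x * (sigmaPoly n).eval x := by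
  simp only [sigmaPoly, eval_sub, eval_C, eval_add_one_antidiff, eval_mul, eval_X]
  ring

lemma eval_zero_sigmaPoly_succ (n : ℕ) : (sigmaPoly (n + 1)).eval 0 = 0 := by
  simp [sigmaPoly]

lemma eval_sigmaPoly (n j : ℕ) : (sigmaPoly n).eval (j : ℚ) = sigmaP n j := by
  induction n generalizing j with
  | zero => simp [sigmaPoly, sigmaP_zero_left]
  | succ n ihn =>
    induction j with
    | zero => simp [eval_zero_sigmaPoly_succ, sigmaP_succ_zero]
    | succ j ihj => rw [Nat.cast_succ, eval_add_one_sigmaPoly_succ, ihj, ihn, sigmaP_succ_succ]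

noncomputable def qPoly (n : ℕ) : ℚ[X] := (-1) ^ n * (sigmaPoly n).comp (1 - X)

lemma natDegree_qPoly_le (n : ℕ) : (qPoly n).natDegree ≤ 2 * n := by
  have h : (1 - X : ℚ[X]).natDegree = 1 := by compute_degree!
  refine natDegree_mul_le.trans ?_
  simpa [natDegree_comp, h] using natDegree_sigmaPoly_le n

lemma eval_add_one_qPoly_succ (n : ℕ) (x : ℚ) :
    (qPoly (n + 1)).eval (x + 1) = (qPoly (n + 1)).eval x - x * (qPoly n).eval (x + 1) := by
  have h := eval_add_one_sigmaPoly_succ n (-x)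
  simp only [qPoly, eval_mul, eval_pow, eval_neg, eval_one, eval_comp, eval_sub, eval_X,
    sub_add_cancel_right]
  rw [show 1 - x = -x + 1 by ring, h]
  ring

lemma eval_zero_qPoly_succ (n : ℕ) : (qPoly (n + 1)).eval 0 = 0 := by
  simpa [qPoly, eval_zero_sigmaPoly_succ] using eval_add_one_sigmaPoly_succ n 0

lemma eval_qPoly (n j : ℕ) : (qPoly n).eval (j : ℚ) = QP j n := by
  induction n generalizing j with
  | zero => simp [qPoly, sigmaPoly, QP]
  | succ n ihn =>
    induction j with
    | zero => simp [eval_zero_qPoly_succ, QP_zero_succ]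
    | succ j ihj =>
      rw [Nat.cast_succ, eval_add_one_qPoly_succ, ihj, ← Nat.cast_succ, ihn, QP_succ_eq]
      ring

lemma qPoly_comp_one_sub (n : ℕ) : (qPoly n).comp (1 - X) = (-1) ^ n * sigmaPoly n := by
  simp [qPoly, mul_comp, comp_assoc]

lemma Polynomial.eq_of_eval_natCast_eq {R : Type*} [CommRing R] [IsDomain R] [CharZero R]
    {p q : R[X]} (h : ∀ j : ℕ, 1 ≤ j → p.eval (j : R) = q.eval (j : R)) : p = q := by
  refine eq_of_infinite_eval_eq p q <| Set.infinite_of_injective_forall_mem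
    (f := fun j : ℕ => ((j + 1 : ℕ) : R)) (fun a b hab => by simpa using hab) fun j => ?_
  exact h (j + 1) (by omega)

theorem stmt9 (n : ℕ) :
    (∃! pr : Polynomial ℚ × Polynomial ℚ,
        pr.1.natDegree ≤ 2 * n ∧ pr.2.natDegree ≤ 2 * n ∧
        ∀ j : ℕ, 1 ≤ j → pr.1.eval (j : ℚ) = sigmaP n j ∧ pr.2.eval (j : ℚ) = QP j n) ∧
    (∀ pr : Polynomial ℚ × Polynomial ℚ,
        (pr.1.natDegree ≤ 2 * n ∧ pr.2.natDegree ≤ 2 * n ∧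
          ∀ j : ℕ, 1 ≤ j → pr.1.eval (j : ℚ) = sigmaP n j ∧ pr.2.eval (j : ℚ) = QP j n) →
        pr.2.comp (1 - Polynomial.X) = (-1) ^ n * pr.1) := by
  have eq_of_spec : ∀ pr : ℚ[X] × ℚ[X],
      (pr.1.natDegree ≤ 2 * n ∧ pr.2.natDegree ≤ 2 * n ∧
        ∀ j : ℕ, 1 ≤ j → pr.1.eval (j : ℚ) = sigmaP n j ∧ pr.2.eval (j : ℚ) = QP j n) →
      pr = (sigmaPoly n, qPoly n) := by
    rintro ⟨p, r⟩ ⟨-, -, h⟩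
    exact Prod.ext (eq_of_eval_natCast_eq fun j hj => (h j hj).1.trans (eval_sigmaPoly n j).symm)
      (eq_of_eval_natCast_eq fun j hj => (h j hj).2.trans (eval_qPoly n j).symm)
  refine ⟨⟨(sigmaPoly n, qPoly n), ⟨natDegree_sigmaPoly_le n, natDegree_qPoly_le n,
    fun j _ => ⟨eval_sigmaPoly n j, eval_qPoly n j⟩⟩, eq_of_spec⟩, fun pr hpr => ?_⟩
  rw [eq_of_spec pr hpr]
  exact qPoly_comp_one_sub n
end

section
/- (a) For every integer m≥2, the coefficient of X in the interpolating polynomial p_m of σ_m equals −B_m/m. (b) For every integer n≥2, the coefficient of X² in p_{2n} equals (1/(2n))·Σ_{k=1}^{n−1} B_{2k} B_{2n−2k}/(2n−2k). -/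
open Finset

namespace Polynomial

theorem eq_of_eval_natCast_eq_s16 {R : Type*} [CommRing R] [IsDomain R] [CharZero R]
    {P Q : R[X]} (h : ∀ j : ℕ, 1 ≤ j → P.eval (j : R) = Q.eval (j : R)) : P = Q := by
  refine eq_of_infinite_eval_eq P Q (Set.Infinite.mono ?_ ((Set.Ici_infinite 1).image
    fun a _ b _ hab => Nat.cast_injective hab))
  rintro _ ⟨j, hj, rfl⟩
  exact h j hj

theorem mul_coeff_two {R : Type*} [Semiring R] (P Q : R[X]) :
    (P * Q).coeff 2 = P.coeff 0 * Q.coeff 2 + P.coeff 1 * Q.coeff 1 + P.coeff 2 * Q.coeff 0 := by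
  simp [coeff_mul, Nat.antidiagonal_succ, add_assoc]

end Polynomial

theorem Finset.Icc_one_eq_map_univ_fin (N : ℕ) :
    Icc 1 N = (univ : Finset (Fin N)).map (Fin.valEmbedding.trans (addRightEmbedding 1)) := by
  ext k
  simp only [mem_Icc, mem_map, mem_univ, true_and, Function.Embedding.trans_apply,
    Fin.valEmbedding_apply, addRightEmbedding_apply]
  constructor
  · rintro ⟨h1, h2⟩
    exact ⟨⟨k - 1, by omega⟩, by simp only; omega⟩
  · rintro ⟨i, rfl⟩
    omega

section Newton

open MvPolynomial

theorem aeval_esymm_eq_sigmaP (N m : ℕ) :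
    aeval (fun i : Fin N => (i : ℚ) + 1) (esymm (Fin N) ℚ m) = sigmaP m (N + 1) := by
  rw [aeval_esymm_eq_multiset_esymm, esymm_map_val, sigmaP, Nat.add_sub_cancel,
    Icc_one_eq_map_univ_fin, powersetCard_map, sum_map]
  refine sum_congr rfl fun t _ => ?_
  simp [prod_map]

theorem aeval_psum_eq_sum_range_pow (N e : ℕ) (he : e ≠ 0) :
    aeval (fun i : Fin N => (i : ℚ) + 1) (psum (Fin N) ℚ e) =
      ∑ k ∈ range (N + 1), (k : ℚ) ^ e := by
  simp only [psum, map_sum, map_pow, aeval_X]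
  rw [sum_range_succ', Fin.sum_univ_eq_sum_range (fun i => ((i : ℚ) + 1) ^ e)]
  simp [zero_pow he]

theorem mul_sigmaP_eq_sum (m N : ℕ) :
    m * sigmaP m (N + 1) = (-1) ^ (m + 1) * ∑ r ∈ range m,
      (-1) ^ r * sigmaP r (N + 1) * ∑ k ∈ range (N + 1), (k : ℚ) ^ (m - r) := by
  have h := congrArg (aeval fun i : Fin N => (i : ℚ) + 1) (mul_esymm_eq_sum (Fin N) ℚ m)
  simp only [map_mul, map_sum, map_pow, map_neg, map_one, map_natCast,
    aeval_esymm_eq_sigmaP] at h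
  rw [h, sum_filter, Nat.sum_antidiagonal_eq_sum_range_succ_mk, sum_range_succ, if_neg (by simp),
    add_zero]
  refine congrArg _ (sum_congr rfl fun r hr => ?_)
  rw [if_pos (mem_range.1 hr), aeval_psum_eq_sum_range_pow _ _ (by grind)]

end Newton

open Polynomial hiding bernoulli

noncomputable def faulhaberPoly (i : ℕ) : ℚ[X] :=
  ∑ r ∈ range (i + 1), C (bernoulli r * (i + 1).choose r / (i + 1)) * X ^ (i + 1 - r)

theorem eval_faulhaberPoly (i n : ℕ) : (faulhaberPoly i).eval (n : ℚ) = ∑ k ∈ range n, (k : ℚ) ^ i := by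
  rw [sum_range_pow, faulhaberPoly, eval_finsetSum]
  refine sum_congr rfl fun r _ => ?_
  simp only [eval_mul, eval_C, eval_pow, eval_X]
  ring

theorem coeff_faulhaberPoly_zero (i : ℕ) : (faulhaberPoly i).coeff 0 = 0 := by
  simp only [faulhaberPoly, finsetSum_coeff, coeff_C_mul, coeff_X_pow]
  exact sum_eq_zero fun r hr => by rw [if_neg (by grind)]; ring

theorem coeff_faulhaberPoly_sub {i r : ℕ} (hr : r ≤ i) :
    (faulhaberPoly i).coeff (i + 1 - r) = bernoulli r * (i + 1).choose r / (i + 1) := by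
  simp only [faulhaberPoly, finsetSum_coeff, coeff_C_mul, coeff_X_pow]
  rw [sum_eq_single_of_mem r (mem_range.2 (by omega)) fun s hs hsr => by
    rw [if_neg (by grind)]; ring]
  simp

theorem coeff_faulhaberPoly_one (i : ℕ) : (faulhaberPoly i).coeff 1 = bernoulli i := by
  have hi : (i + 1 : ℚ) ≠ 0 := by positivity
  rw [show 1 = i + 1 - i by omega, coeff_faulhaberPoly_sub le_rfl, Nat.choose_succ_self_right]
  push_cast
  field_simp

theorem coeff_faulhaberPoly_two {i : ℕ} (hi : i ≠ 0) :
    (faulhaberPoly i).coeff 2 = bernoulli (i - 1) * (i + 1).choose (i - 1) / (i + 1) := by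
  rw [← coeff_faulhaberPoly_sub (by omega), show i + 1 - (i - 1) = 2 by omega]

def IsSigmaInterpolant (p : ℕ → ℚ[X]) : Prop :=
  ∀ n j : ℕ, 1 ≤ j → (p n).eval (j : ℚ) = sigmaP n j

namespace IsSigmaInterpolant

variable {p : ℕ → ℚ[X]}

theorem apply_zero (hp : IsSigmaInterpolant p) : p 0 = 1 :=
  eq_of_eval_natCast_eq_s16 fun j hj => by simp [hp 0 j hj, sigmaP]

theorem C_mul_eq_sum (hp : IsSigmaInterpolant p) (m : ℕ) :
    C (m : ℚ) * p m = C ((-1) ^ (m + 1)) *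
      ∑ r ∈ range m, C ((-1) ^ r) * (p r * faulhaberPoly (m - r)) := by
  refine eq_of_eval_natCast_eq_s16 fun j hj => ?_
  obtain ⟨N, rfl⟩ : ∃ N, j = N + 1 := ⟨j - 1, by omega⟩
  simp only [eval_mul, eval_C, eval_finsetSum, hp _ _ hj, eval_faulhaberPoly, mul_sigmaP_eq_sum]
  simp only [mul_assoc]

theorem coeff_zero_eq_zero (hp : IsSigmaInterpolant p) {m : ℕ} (hm : m ≠ 0) :
    (p m).coeff 0 = 0 := by
  have h := congrArg (coeff · 0) (hp.C_mul_eq_sum m)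
  simpa [finsetSum_coeff, coeff_faulhaberPoly_zero, hm] using h

theorem coeff_one_eq (hp : IsSigmaInterpolant p) {m : ℕ} (hm : m ≠ 0) :
    (p m).coeff 1 = (-1) ^ (m + 1) * bernoulli m / m := by
  have h := congrArg (coeff · 1) (hp.C_mul_eq_sum m)
  simp only [coeff_C_mul, finsetSum_coeff] at h
  simp only [mul_coeff_one, coeff_faulhaberPoly_zero, coeff_faulhaberPoly_one, mul_zero,
    add_zero] at h
  rw [sum_range_eq_add_Ico _ (by omega), sum_eq_zero fun r hr => by
    rw [hp.coeff_zero_eq_zero (by grind)]; ring] at h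
  simp only [hp.apply_zero, coeff_one_zero] at h
  field_simp
  linear_combination h

theorem natCast_mul_coeff_two (hp : IsSigmaInterpolant p) {m : ℕ} (hm : m ≠ 0) :
    m * (p m).coeff 2 = (-1) ^ m *
      (∑ r ∈ Ico 1 m, bernoulli r * bernoulli (m - r) / r - (faulhaberPoly m).coeff 2) := by
  have hterm : ∀ r ∈ Ico 1 m, (-1) ^ r * ((p r).coeff 0 * (faulhaberPoly (m - r)).coeff 2 +
      (p r).coeff 1 * bernoulli (m - r)) = -(bernoulli r * bernoulli (m - r) / r) := by
    intro r hr
    have hsign : (-1 : ℚ) ^ r * (-1) ^ (r + 1) = -1 := by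
      rw [← pow_add]
      exact Odd.neg_one_pow ⟨r, by ring⟩
    rw [hp.coeff_zero_eq_zero (by grind), hp.coeff_one_eq (by grind)]
    linear_combination bernoulli r * bernoulli (m - r) / r * hsign
  have h := congrArg (coeff · 2) (hp.C_mul_eq_sum m)
  simp only [coeff_C_mul, finsetSum_coeff] at h
  simp only [mul_coeff_two, coeff_faulhaberPoly_zero, coeff_faulhaberPoly_one, mul_zero, add_zero] at h
  rw [sum_range_eq_add_Ico _ (by omega), sum_congr rfl hterm, sum_neg_distrib] at h
  simp only [hp.apply_zero, one_mul, coeff_one, one_ne_zero, if_true, if_false,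
    pow_zero, zero_mul, add_zero, Nat.sub_zero] at h
  rw [h, pow_succ]
  ring

end IsSigmaInterpolant

theorem sum_Ico_bernoulli_mul_bernoulli_div {n : ℕ} (hn : 2 ≤ n) :
    ∑ r ∈ Ico 1 (2 * n), bernoulli r * bernoulli (2 * n - r) / r =
      ∑ k ∈ Icc 1 (n - 1), bernoulli (2 * k) * bernoulli (2 * n - 2 * k) / (2 * (n : ℚ) - 2 * k) := by
  have hodd : ∀ r ∈ Ico 1 (2 * n), Odd r → bernoulli r * bernoulli (2 * n - r) = 0 := by
    intro r hr hr_odd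
    rcases (mem_Ico.1 hr).1.eq_or_lt with rfl | hr1
    · rw [bernoulli_eq_zero_of_odd (n := 2 * n - 1) ⟨n - 1, by omega⟩ (by omega), mul_zero]
    · rw [bernoulli_eq_zero_of_odd hr_odd hr1, zero_mul]
  have hsub : (Ico 1 n).map ⟨(2 * ·), mul_right_injective₀ two_ne_zero⟩ ⊆ Ico 1 (2 * n) := by
    intro r hr
    simp only [mem_map, mem_Ico, Function.Embedding.coeFn_mk] at hr ⊢
    omega
  let f (k : ℕ) : ℚ := bernoulli (2 * k) * bernoulli (2 * n - 2 * k) / (2 * k : ℕ)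
  calc _ = ∑ k ∈ Ico 1 n, f k := by
        rw [← sum_subset hsub fun r hr hr_even => ?_, sum_map]
        · rfl
        · rw [hodd r hr (Nat.not_even_iff_odd.1 fun ⟨k, hk⟩ => hr_even ?_), zero_div]
          simp only [mem_map, mem_Ico, Function.Embedding.coeFn_mk] at hr ⊢
          exact ⟨k, by omega, by omega⟩
    _ = ∑ k ∈ Ico 1 n, f (n - k) := by
        rw [sum_Ico_reflect f 1 (Nat.le_succ n)]
        simp
    _ = _ := by
        rw [show Icc 1 (n - 1) = Ico 1 n by ext; simp; omega]
        refine sum_congr rfl fun k hk => ?_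
        have hk : k < n := (mem_Ico.1 hk).2
        simp only [f]
        rw [show 2 * n - 2 * (n - k) = 2 * k by omega, show 2 * (n - k) = 2 * n - 2 * k by omega,
          Nat.cast_sub (by omega), mul_comm (bernoulli _)]
        push_cast
        ring

theorem stmt16_general (p : ℕ → Polynomial ℚ)
    (hpval : ∀ n : ℕ, ∀ j : ℕ, 1 ≤ j → (p n).eval (j : ℚ) = sigmaP n j) :
    (∀ m : ℕ, 2 ≤ m → (p m).coeff 1 = -bernoulli m / (m : ℚ)) ∧
    (∀ n : ℕ, 2 ≤ n → (p (2 * n)).coeff 2 =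
      (1 / (2 * (n : ℚ))) *
        ∑ k ∈ Finset.Icc 1 (n - 1),
          bernoulli (2 * k) * bernoulli (2 * n - 2 * k) / (2 * (n : ℚ) - 2 * (k : ℚ))) := by
  have hp : IsSigmaInterpolant p := hpval
  refine ⟨fun m hm => ?_, fun n hn => ?_⟩
  · rw [hp.coeff_one_eq (by omega)]
    rcases Nat.even_or_odd m with hm_even | hm_odd
    · rw [hm_even.add_one.neg_one_pow]
      ring
    · rw [bernoulli_eq_zero_of_odd hm_odd (by omega)]
      ring
  · have h := hp.natCast_mul_coeff_two (m := 2 * n) (by omega)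
    rw [coeff_faulhaberPoly_two (by omega),
      bernoulli_eq_zero_of_odd (n := 2 * n - 1) ⟨n - 1, by omega⟩ (by omega),
      (even_two_mul n).neg_one_pow, sum_Ico_bernoulli_mul_bernoulli_div hn] at h
    simp only [zero_mul, zero_div, sub_zero, one_mul, Nat.cast_mul, Nat.cast_ofNat] at h
    rw [← h]
    field_simp

theorem stmt16 (p : ℕ → Polynomial ℚ)
    (hpdeg : ∀ n : ℕ, (p n).natDegree ≤ 2 * n)
    (hpval : ∀ n : ℕ, ∀ j : ℕ, 1 ≤ j → (p n).eval (j : ℚ) = sigmaP n j) :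
    (∀ m : ℕ, 2 ≤ m → (p m).coeff 1 = -bernoulli m / (m : ℚ)) ∧
    (∀ n : ℕ, 2 ≤ n → (p (2 * n)).coeff 2 =
      (1 / (2 * (n : ℚ))) *
        ∑ k ∈ Finset.Icc 1 (n - 1),
          bernoulli (2 * k) * bernoulli (2 * n - 2 * k) / (2 * (n : ℚ) - 2 * (k : ℚ))) :=
  stmt16_general p hpval
end
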